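/- Let f and g be two nonnegative supermodular set functions on P(V) that are both nonincreasing or both nondecreasing. Then the pointwise product fg is supermodular. -/

import Mathlib

/-!
For monotone `f`, `g` the supermodularity defect of `f * g` at `a, b` splits as
`(defect of f) * g (a ⊔ b) + (f a - f (a ⊓ b)) * (g (a ⊔ b) - g a)`
`+ (f b - f (a ⊓ b)) * (g (a ⊔ b) - g b) + f (a ⊓ b) * (defect of g)`,
a sum of products of nonnegative factors. The antitone case is the monotone one on the order dual.
-/

section

variable {α R : Type*} [Lattice α]

def Supermodular [Add R] [LE R] (f : α → R) : Prop :=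
  ∀ a b, f a + f b ≤ f (a ⊔ b) + f (a ⊓ b)

namespace Supermodular

theorem dual [AddCommMagma R] [LE R] {f : α → R} (hf : Supermodular f) :
    Supermodular (f ∘ OrderDual.ofDual) :=
  fun a b => (hf (OrderDual.ofDual a) (OrderDual.ofDual b)).trans_eq (add_comm _ _)

theorem mul_of_monotone [CommRing R] [PartialOrder R] [IsOrderedRing R] {f g : α → R}
    (hf : Supermodular f) (hg : Supermodular g)
    (hf_mono : Monotone f) (hg_mono : Monotone g) (hf0 : 0 ≤ f) (hg0 : 0 ≤ g) :
    Supermodular (f * g) := by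
  intro a b
  have h₁ : 0 ≤ (f (a ⊔ b) + f (a ⊓ b) - f a - f b) * g (a ⊔ b) :=
    mul_nonneg (by linear_combination hf a b) (hg0 _)
  have h₂ : 0 ≤ (f a - f (a ⊓ b)) * (g (a ⊔ b) - g a) :=
    mul_nonneg (sub_nonneg.2 (hf_mono inf_le_left)) (sub_nonneg.2 (hg_mono le_sup_left))
  have h₃ : 0 ≤ (f b - f (a ⊓ b)) * (g (a ⊔ b) - g b) :=
    mul_nonneg (sub_nonneg.2 (hf_mono inf_le_right)) (sub_nonneg.2 (hg_mono le_sup_right))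
  have h₄ : 0 ≤ f (a ⊓ b) * (g (a ⊔ b) + g (a ⊓ b) - g a - g b) :=
    mul_nonneg (hf0 _) (by linear_combination hg a b)
  simp only [Pi.mul_apply]
  linear_combination h₁ + h₂ + h₃ + h₄

theorem mul_of_antitone [CommRing R] [PartialOrder R] [IsOrderedRing R] {f g : α → R}
    (hf : Supermodular f) (hg : Supermodular g)
    (hf_anti : Antitone f) (hg_anti : Antitone g) (hf0 : 0 ≤ f) (hg0 : 0 ≤ g) :
    Supermodular (f * g) :=
  (mul_of_monotone hf.dual hg.dual hf_anti.dual_left hg_anti.dual_left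
    (fun a => hf0 a.ofDual) (fun a => hg0 a.ofDual)).dual

end Supermodular

end

theorem product_supermodular_general {V : Type*} [DecidableEq V]
    (f g : Finset V → ℝ)
    (hf : ∀ A B : Finset V, f (A ∪ B) + f (A ∩ B) ≥ f A + f B)
    (hg : ∀ A B : Finset V, g (A ∪ B) + g (A ∩ B) ≥ g A + g B)
    (hf0 : ∀ A : Finset V, 0 ≤ f A)
    (hg0 : ∀ A : Finset V, 0 ≤ g A)
    (hmono : ((∀ A B : Finset V, A ⊆ B → f B ≤ f A) ∧ (∀ A B : Finset V, A ⊆ B → g B ≤ g A)) ∨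
             ((∀ A B : Finset V, A ⊆ B → f A ≤ f B) ∧ (∀ A B : Finset V, A ⊆ B → g A ≤ g B))) :
    ∀ A B : Finset V,
      f (A ∪ B) * g (A ∪ B) + f (A ∩ B) * g (A ∩ B) ≥ f A * g A + f B * g B := by
  have hprod : Supermodular (f * g) := by
    rcases hmono with ⟨hf_anti, hg_anti⟩ | ⟨hf_mono, hg_mono⟩
    · exact Supermodular.mul_of_antitone hf hg (fun A B => hf_anti A B)
        (fun A B => hg_anti A B) hf0 hg0
    · exact Supermodular.mul_of_monotone hf hg (fun A B => hf_mono A B)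
        (fun A B => hg_mono A B) hf0 hg0
  exact hprod

/-- The product of two nonnegative supermodular set functions that are both
nonincreasing or both nondecreasing is supermodular. -/
theorem product_supermodular {V : Type*} [Fintype V] [DecidableEq V]
    (f g : Finset V → ℝ)
    (hf : ∀ A B : Finset V, f (A ∪ B) + f (A ∩ B) ≥ f A + f B)
    (hg : ∀ A B : Finset V, g (A ∪ B) + g (A ∩ B) ≥ g A + g B)
    (hf0 : ∀ A : Finset V, 0 ≤ f A)
    (hg0 : ∀ A : Finset V, 0 ≤ g A)
    (hmono : ((∀ A B : Finset V, A ⊆ B → f B ≤ f A) ∧ (∀ A B : Finset V, A ⊆ B → g B ≤ g A)) ∨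
             ((∀ A B : Finset V, A ⊆ B → f A ≤ f B) ∧ (∀ A B : Finset V, A ⊆ B → g A ≤ g B))) :
    ∀ A B : Finset V,
      f (A ∪ B) * g (A ∪ B) + f (A ∩ B) * g (A ∩ B) ≥ f A * g A + f B * g B :=
  product_supermodular_general f g hf hg hf0 hg0 hmono
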